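/- Let n, m ≥ 2, let c1, c2 > 0, and let T be a deterministic decision tree over Σ^M such that T(x^ℓ) = 0 for every ℓ : [m] → [n], and such that on every input x^ℓ, at the moment T reaches its output leaf, either at least c1·m of the queried cells have value 0 or at least c2·n·m cells have been queried. Then the expected cost of T over the hard distribution satisfies E_ℓ[C(T, x^ℓ)] ≥ (1/2)·min(⌊c1·n·m/8⌋, c2·n·m), where ℓ is uniform over all functions [m] → [n]. -/

import Mathlib

open Classical
open scoped ENNReal

set_option maxHeartbeats 1000000

/-! ### Deterministic decision trees -/

inductive DTree (ι σ : Type) : Type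
  | leaf (b : Bool) : DTree ι σ
  | node (v : ι) (child : σ → DTree ι σ) : DTree ι σ

namespace DTree

variable {ι σ : Type}

/-- The output of the decision tree on input `x`. -/
def eval (x : ι → σ) : DTree ι σ → Bool
  | leaf b => b
  | node v child => (child (x v)).eval x

/-- The list of variables queried by the decision tree on input `x`,
in the order they are queried. -/
def queryList (x : ι → σ) : DTree ι σ → List ι
  | leaf _ => []
  | node v child => v :: (child (x v)).queryList x

/-- The cost of the decision tree on input `x`: the number of internal nodes visited. -/
def cost (T : DTree ι σ) (x : ι → σ) : ℕ := (T.queryList x).length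

/-- `T` computes `f` if it outputs `f x` on every input `x`. -/
def Computes (T : DTree ι σ) (f : (ι → σ) → Bool) : Prop := ∀ x, T.eval x = f x

end DTree

/-- Deterministic query complexity. -/
noncomputable def detComplexity {ι σ : Type} (f : (ι → σ) → Bool) : ℕ :=
  sInf {d : ℕ | ∃ T : DTree ι σ, T.Computes f ∧ ∀ x, T.cost x ≤ d}

/-- Expected cost of a randomized decision tree (a distribution over deterministic
decision trees) on input `x`. -/
noncomputable def expCost {ι σ : Type} (μ : PMF (DTree ι σ)) (x : ι → σ) : ℝ≥0∞ :=
  ∑' T : DTree ι σ, μ T * (T.cost x : ℝ≥0∞)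

/-- Zero-error (Las Vegas) randomized query complexity. -/
noncomputable def R0query {ι σ : Type} (f : (ι → σ) → Bool) : ℝ≥0∞ :=
  ⨅ μ ∈ {μ : PMF (DTree ι σ) | ∀ T ∈ μ.support, T.Computes f},
    ⨆ x : ι → σ, expCost μ x

/-- One-sided error randomized query complexity. -/
noncomputable def R1query {ι σ : Type} (f : (ι → σ) → Bool) : ℝ≥0∞ :=
  ⨅ μ ∈ {μ : PMF (DTree ι σ) |
      (∀ x, f x = false → ∀ T ∈ μ.support, T.eval x = false) ∧
      (∀ x, f x = true → 1 / 2 ≤ ∑' T : DTree ι σ, if T.eval x = true then μ T else 0)},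
    ⨆ x : ι → σ, expCost μ x

/-- Bounded-error (Monte Carlo) randomized query complexity. -/
noncomputable def Rquery {ι σ : Type} (f : (ι → σ) → Bool) : ℝ≥0∞ :=
  ⨅ μ ∈ {μ : PMF (DTree ι σ) |
      ∀ x, 9 / 10 ≤ ∑' T : DTree ι σ, if T.eval x = f x then μ T else 0},
    ⨆ x : ι → σ, expCost μ x
/-! ### Quantum query algorithms -/

/-- The standard quantum query oracle `O_x |j,p⟩|w⟩ = |j, p + x_j mod S⟩|w⟩`,
as a matrix. -/
noncomputable def qOracle {V ω : Type} [DecidableEq V] [DecidableEq ω] {S : ℕ}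
    (x : V → Fin S) : Matrix (V × Fin S × ω) (V × Fin S × ω) ℂ :=
  fun r c => if r = (c.1, c.2.1 + x c.1, c.2.2) then 1 else 0

/-- A quantum query algorithm on inputs `x : V → Fin S`, making `queries` queries, with
workspace `Fin (W+1)`, alternating the unitaries `U 0, …, U queries` with the oracle,
and measuring with the projector `P` at the end. -/
structure QAlg (V : Type) [Fintype V] [DecidableEq V] (S : ℕ) [NeZero S] where
  queries : ℕ
  W : ℕ
  init : V
  U : ℕ → Matrix (V × Fin S × Fin (W + 1)) (V × Fin S × Fin (W + 1)) ℂ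
  hU : ∀ t, (U t).conjTranspose * U t = 1 ∧ U t * (U t).conjTranspose = 1
  P : Matrix (V × Fin S × Fin (W + 1)) (V × Fin S × Fin (W + 1)) ℂ
  hP : P.conjTranspose = P ∧ P * P = P

namespace QAlg

variable {V : Type} [Fintype V] [DecidableEq V] {S : ℕ} [NeZero S]

/-- The state of the quantum algorithm after `t` steps on input `x`. -/
noncomputable def state (A : QAlg V S) (x : V → Fin S) :
    ℕ → (V × Fin S × Fin (A.W + 1) → ℂ)
  | 0 => (A.U 0).mulVec fun r => if r = (A.init, 0, 0) then 1 else 0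
  | t + 1 => (A.U (t + 1)).mulVec ((qOracle x).mulVec (A.state x t))

/-- The probability that the algorithm accepts input `x`: `‖P |Ψ_x⟩‖²`. -/
noncomputable def acceptProb (A : QAlg V S) (x : V → Fin S) : ℝ :=
  ∑ r : V × Fin S × Fin (A.W + 1), Complex.normSq (A.P.mulVec (A.state x A.queries) r)

end QAlg

/-- Bounded-error quantum query complexity (for functions over a finite input
alphabet `σ`, identified with `Fin (card σ)` via a fixed bijection). -/
noncomputable def Qquery {V σ : Type} [Fintype V] [DecidableEq V] [Fintype σ] [Nonempty σ]
    (f : (V → σ) → Bool) : ℕ :=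
  letI : NeZero (Fintype.card σ) := ⟨Fintype.card_ne_zero⟩
  sInf {t : ℕ | ∃ A : QAlg V (Fintype.card σ), A.queries = t ∧
    ∀ x : V → σ,
      (f x = true → 9 / 10 ≤ A.acceptProb fun j => Fintype.equivFin σ (x j)) ∧
      (f x = false → A.acceptProb (fun j => Fintype.equivFin σ (x j)) ≤ 1 / 10)}

/-- Exact quantum query complexity. -/
noncomputable def QEquery {V σ : Type} [Fintype V] [DecidableEq V] [Fintype σ] [Nonempty σ]
    (f : (V → σ) → Bool) : ℕ :=
  letI : NeZero (Fintype.card σ) := ⟨Fintype.card_ne_zero⟩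
  sInf {t : ℕ | ∃ A : QAlg V (Fintype.card σ), A.queries = t ∧
    ∀ x : V → σ,
      (f x = true → A.acceptProb (fun j => Fintype.equivFin σ (x j)) = 1) ∧
      (f x = false → A.acceptProb (fun j => Fintype.equivFin σ (x j)) = 0)}

/-- Approximate degree of a boolean function. -/
noncomputable def adeg {ι : Type} (F : (ι → Bool) → Bool) : ℕ :=
  sInf {d : ℕ | ∃ p : MvPolynomial ι ℝ, p.totalDegree ≤ d ∧
    ∀ y : ι → Bool, |MvPolynomial.eval (fun i => if y i then (1 : ℝ) else 0) p -
      (if F y then 1 else 0)| ≤ 1 / 10}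
/-! ### The pointer functions of Göös–Pitassi–Watson type -/

/-- A symbol of the input alphabet: a boolean value, a left pointer, a right pointer,
and a back/internal pointer (to a cell or a column, depending on `β`). -/
structure PSym (n m : ℕ) (β : Type) where
  val : Bool
  lp : Option (Fin n × Fin m)
  rp : Option (Fin n × Fin m)
  bp : Option β
deriving DecidableEq

/-- The all-ones symbol `(1,⊥,⊥,⊥)`. -/
def PSym.one (n m : ℕ) (β : Type) : PSym n m β := ⟨true, none, none, none⟩

/-- The symbol `(0,⊥,⊥,⊥)`. -/
def PSym.zero (n m : ℕ) (β : Type) : PSym n m β := ⟨false, none, none, none⟩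

def PSym.equivProd (n m : ℕ) (β : Type) :
    PSym n m β ≃ Bool × Option (Fin n × Fin m) × Option (Fin n × Fin m) × Option β where
  toFun v := (v.val, v.lp, v.rp, v.bp)
  invFun p := ⟨p.1, p.2.1, p.2.2.1, p.2.2.2⟩
  left_inv _ := rfl
  right_inv _ := rfl

instance {n m : ℕ} {β : Type} [Fintype β] : Fintype (PSym n m β) :=
  Fintype.ofEquiv _ (PSym.equivProd n m β).symm

instance {n m : ℕ} {β : Type} : Nonempty (PSym n m β) := ⟨PSym.one n m β⟩

/-- The sequence of k bits of `j`, most significant first:  the root-to-leaf path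
(`false` = left, `true` = right) of the `j`-th leaf in the complete binary tree of depth `k`. -/
def bitsPath (k j : ℕ) : List Bool :=
  ((List.range k).reverse).map fun i => j.testBit i

/-- The root-to-leaf path of the leaf labeled `j` (0-indexed) in the balanced binary tree
with `m` leaves: the complete binary tree if `m` is a power of 2, and otherwise the complete
binary tree on `2 ^ ⌊log₂ m⌋` leaves with a pair of children added to each of the
`m - 2 ^ ⌊log₂ m⌋` leftmost leaves. -/
def treePath (m j : ℕ) : List Bool :=
  if m - 2 ^ Nat.log 2 m = 0 then bitsPath (Nat.log 2 m) j
  else if j < 2 * (m - 2 ^ Nat.log 2 m) then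
    bitsPath (Nat.log 2 m) (j / 2) ++ [j % 2 == 1]
  else bitsPath (Nat.log 2 m) (j - (m - 2 ^ Nat.log 2 m))

/-- Starting at cell `a` and following the left/right pointers of `x` as prescribed by the
list `p` of moves (`false` = left pointer, `true` = right pointer); returns `none` if a
null pointer is encountered. -/
def followPath {n m : ℕ} {β : Type} (x : Fin n × Fin m → PSym n m β)
    (a : Fin n × Fin m) (p : List Bool) : Option (Fin n × Fin m) :=
  p.foldl (fun acc b => acc.bind fun c => if b then (x c).rp else (x c).lp) (some a)

/-- The conditions for `x` to be a 1-input of `f_{n,m}`, with marked column `b` and special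
element `a`: (1) `b` is the unique all-1 column; (2) `a` is the unique cell of column `b`
with `x_a ≠ (1,⊥,⊥,⊥)`; (3) for every column `j ≠ b` the tree path from `a` to the leaf
labeled `j` exists, and ends at a cell `ℓ_j` of column `j` holding a 0; (4) the back pointer
of each `ℓ_j` points to the column `b`. -/
def fCond (n m : ℕ) (x : Fin n × Fin m → PSym n m (Fin m))
    (b : Fin m) (a : Fin n × Fin m) : Prop :=
  (∀ j : Fin m, (∀ i : Fin n, (x (i, j)).val = true) ↔ j = b) ∧
  a.2 = b ∧
  (∀ i : Fin n, x (i, b) ≠ PSym.one n m (Fin m) ↔ (i, b) = a) ∧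
  ∀ j : Fin m, j ≠ b →
    ∃ ℓ : Fin n × Fin m, followPath x a (treePath m j.1) = some ℓ ∧
      ℓ.2 = j ∧ (x ℓ).val = false ∧ (x ℓ).bp = some b

/-- The pointer function `f_{n,m}`, with back pointers to the marked column. -/
noncomputable def fFun (n m : ℕ) (x : Fin n × Fin m → PSym n m (Fin m)) : Bool :=
  if ∃ b a, fCond n m x b a then true else false

/-- The conditions for `x` to be a 1-input of `g_{n,m}`, with marked column `b` and special
element `a`: (1)–(3) as for `f_{n,m}`, and (4′) the set of columns `j ≠ b` whose highlighted
zero `ℓ_j` has back pointer to `a` has size exactly `m/2`. -/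
def gCond (n m : ℕ) (x : Fin n × Fin m → PSym n m (Fin n × Fin m))
    (b : Fin m) (a : Fin n × Fin m) : Prop :=
  (∀ j : Fin m, (∀ i : Fin n, (x (i, j)).val = true) ↔ j = b) ∧
  a.2 = b ∧
  (∀ i : Fin n, x (i, b) ≠ PSym.one n m (Fin n × Fin m) ↔ (i, b) = a) ∧
  (∀ j : Fin m, j ≠ b →
    ∃ ℓ : Fin n × Fin m, followPath x a (treePath m j.1) = some ℓ ∧
      ℓ.2 = j ∧ (x ℓ).val = false) ∧
  {j : Fin m | j ≠ b ∧ ∃ ℓ : Fin n × Fin m,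
      followPath x a (treePath m j.1) = some ℓ ∧ (x ℓ).bp = some a}.ncard = m / 2

/-- The pointer function `g_{n,m}`, where exactly `m/2` of the highlighted zeroes point
back to the special element. -/
noncomputable def gFun (n m : ℕ) (x : Fin n × Fin m → PSym n m (Fin n × Fin m)) : Bool :=
  if ∃ b a, gCond n m x b a then true else false

/-- Column `j` is good in `x` (for `g_{n,m}`): `x` is a 1-input with marked column `b ≠ j`
and special element `a`, and the highlighted zero of column `j` points back to `a`. -/
def goodColumn (n m : ℕ) (x : Fin n × Fin m → PSym n m (Fin n × Fin m)) (j : Fin m) : Prop :=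
  ∃ b a, gCond n m x b a ∧ j ≠ b ∧
    ∃ ℓ : Fin n × Fin m, followPath x a (treePath m j.1) = some ℓ ∧ (x ℓ).bp = some a

/-- The conditions for `x` to be a 1-input of `h_{k,n,m}`, with marked columns `b 0,…,b (k-1)`
and special elements `a 0,…,a (k-1)`: (1) the `b s` are exactly the all-1 columns; (2) `a s` is
the unique cell of column `b s` with `x_{a s} ≠ (1,⊥,⊥,⊥)`; (3) the internal pointers of the
`a s` form a cycle and all the `a s` have equal left pointers and equal right pointers;
(4) for every non-marked column `j` the tree path from any `a s` to the leaf labeled `j`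
exists and ends at a cell `ℓ_j` of column `j` holding a 0. -/
def hCond (k n m : ℕ) (x : Fin n × Fin m → PSym n m (Fin n × Fin m))
    (b : Fin k → Fin m) (a : Fin k → Fin n × Fin m) : Prop :=
  Function.Injective b ∧
  (∀ j : Fin m, (∀ i : Fin n, (x (i, j)).val = true) ↔ ∃ s, b s = j) ∧
  (∀ s, (a s).2 = b s) ∧
  (∀ s, ∀ i : Fin n, x (i, b s) ≠ PSym.one n m (Fin n × Fin m) ↔ (i, b s) = a s) ∧
  (∀ s : Fin k, (x (a s)).bp = some (a ⟨(s.1 + 1) % k, Nat.mod_lt _ s.pos⟩)) ∧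
  (∀ s t : Fin k, (x (a s)).lp = (x (a t)).lp ∧ (x (a s)).rp = (x (a t)).rp) ∧
  ∀ j : Fin m, (∀ s, b s ≠ j) → ∀ s : Fin k,
    ∃ ℓ : Fin n × Fin m, followPath x (a s) (treePath m j.1) = some ℓ ∧
      ℓ.2 = j ∧ (x ℓ).val = false

/-- The pointer function `h_{k,n,m}` with `k` marked columns and no back pointers. -/
noncomputable def hFun (k n m : ℕ) (x : Fin n × Fin m → PSym n m (Fin n × Fin m)) : Bool :=
  if ∃ b a, hCond k n m x b a then true else false

/-- The hard input `x^ℓ`: cell `(i,j)` holds `(0,⊥,⊥,⊥)` if `i = ℓ j` and `(1,⊥,⊥,⊥)`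
otherwise. -/
def xhard (n m : ℕ) (β : Type) (ℓ : Fin m → Fin n) : Fin n × Fin m → PSym n m β :=
  fun c => if c.1 = ℓ c.2 then PSym.zero n m β else PSym.one n m β

/-- The set of (distinct) cells queried among the first `t` queries of `T` on input `x`. -/
def queriedUpTo {ι σ : Type} [DecidableEq ι] (T : DTree ι σ) (x : ι → σ) (t : ℕ) :
    Finset ι :=
  ((T.queryList x).take t).toFinset
/-! ### The progress measure for the hard distribution `x^ℓ` -/

/-- Column `j` is compromised (for the input `x^ℓ`), given the set `Q` of queried cells:
the zero cell `(ℓ j, j)` has been queried, or more than `n/2` cells of column `j` have been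
queried. -/
def compromisedCol (n m : ℕ) (ℓ : Fin m → Fin n) (Q : Finset (Fin n × Fin m))
    (j : Fin m) : Prop :=
  (ℓ j, j) ∈ Q ∨ n < 2 * (Q.filter fun c => c.2 = j).card

/-- The progress measure `I_t = A_t + (2/n)·B_t` of the decision tree `T` on the input `x^ℓ`
after `t` queries, where `A_t` is the number of compromised columns and `B_t` is the number
of queried cells lying outside compromised columns. -/
noncomputable def Imeasure (n m : ℕ)
    (T : DTree (Fin n × Fin m) (PSym n m (Fin n × Fin m))) (ℓ : Fin m → Fin n) (t : ℕ) : ℝ :=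
  ({j : Fin m |
      compromisedCol n m ℓ (queriedUpTo T (xhard n m (Fin n × Fin m) ℓ) t) j}.ncard : ℝ) +
    (2 / n) * ({c : Fin n × Fin m | c ∈ queriedUpTo T (xhard n m (Fin n × Fin m) ℓ) t ∧
      ¬ compromisedCol n m ℓ (queriedUpTo T (xhard n m (Fin n × Fin m) ℓ) t) c.2}.ncard : ℝ)
/-! ### The balanced binary tree, via root-to-node paths -/

/-- The node set of the balanced binary tree with `m` leaves: each node is identified with
the left/right path from the root to it, so the nodes are exactly the prefixes of the
root-to-leaf paths. -/
def treeNodes (m : ℕ) : Finset (List Bool) :=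
  (Finset.range m).biUnion fun j => (treePath m j).inits.toFinset

/-- The leaves of the balanced binary tree with `m` leaves. -/
def leafNodes (m : ℕ) : Finset (List Bool) :=
  (Finset.range m).image fun j => treePath m j

/-- The internal nodes of the balanced binary tree with `m` leaves. -/
def internalNodes (m : ℕ) : Finset (List Bool) :=
  treeNodes m \ leafNodes m

/-- The subtree rooted at a node `u`: all nodes of which `u` is a prefix. -/
def subtreeOf (m : ℕ) (u : List Bool) : Finset (List Bool) :=
  (treeNodes m).filter fun w => u <+: w

/-! ### The hard distribution for `h_{1,n,m}` -/

/-- A parameter quadruple `(v, π, ℓᴸ, ℓᴺ)` for the hard distribution: a bit `v`, a map `π`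
from internal tree nodes to columns, and row maps `ℓᴸ, ℓᴺ` for leaves resp. internal nodes. -/
abbrev HardQ (n m : ℕ) : Type :=
  Bool × ({u : List Bool // u ∈ internalNodes m} → Fin m) × (Fin m → Fin n) × (Fin m → Fin n)

/-- The valid parameter quadruples: `π` injective and `ℓᴸ j ≠ ℓᴺ j` for all `j`. -/
noncomputable def hardSet (n m : ℕ) : Finset (HardQ n m) :=
  Finset.univ.filter fun q => Function.Injective q.2.1 ∧ ∀ j, q.2.2.1 j ≠ q.2.2.2 j

/-- The column of the root of the tree (`none` if the tree has no internal node). -/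
noncomputable def rootCol (n m : ℕ) (q : HardQ n m) : Option (Fin m) :=
  if h : ([] : List Bool) ∈ internalNodes m then some (q.2.1 ⟨[], h⟩) else none

/-- The cell where a child node `w` of an internal node is placed: internal nodes go to
cell `(ℓᴺ (π w), π w)`, the leaf labeled `j` goes to cell `(ℓᴸ j, j)`, and the removed leaf
(the one labeled by the root's column) yields a null pointer. -/
noncomputable def childCell (n m : ℕ) (q : HardQ n m) (w : List Bool) :
    Option (Fin n × Fin m) :=
  if h : w ∈ internalNodes m then some (q.2.2.2 (q.2.1 ⟨w, h⟩), q.2.1 ⟨w, h⟩)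
  else if h2 : ∃ j : Fin m, w = treePath m j.1 ∧ some j ≠ rootCol n m q then
    some (q.2.2.1 (Classical.choose h2), Classical.choose h2)
  else none

/-- The input of the hard distribution determined by the parameter quadruple `q`:
the internal node `u` of the tree is placed at cell `(ℓᴺ (π u), π u)` with left and right
pointers to the cells of its children, value `v` and a self-loop internal pointer if `u` is
the root, and value 0 otherwise; for `j ≠ π(root)`, the leaf labeled `j` is placed at cell
`(ℓᴸ j, j)` with value 0 and null pointers; all the remaining cells hold `(1,⊥,⊥,⊥)`. -/
noncomputable def hardInput (n m : ℕ) (q : HardQ n m) :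
    Fin n × Fin m → PSym n m (Fin n × Fin m) :=
  fun c =>
    if h : ∃ u : {u : List Bool // u ∈ internalNodes m}, q.2.1 u = c.2 ∧ q.2.2.2 c.2 = c.1 then
      { val := if (Classical.choose h).1 = [] then q.1 else false
        lp := childCell n m q ((Classical.choose h).1 ++ [false])
        rp := childCell n m q ((Classical.choose h).1 ++ [true])
        bp := if (Classical.choose h).1 = [] then some c else none }
    else if some c.2 ≠ rootCol n m q ∧ c.1 = q.2.2.1 c.2 then PSym.zero n m (Fin n × Fin m)
    else PSym.one n m (Fin n × Fin m)

/-- Column `j` directly satisfies (i) or (ii): one of the cells `(ℓᴸ j, j)`, `(ℓᴺ j, j)` has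
been queried, or more than half of the cells of column `j` have been queried. -/
def colBad (n m : ℕ) (q : HardQ n m) (Q : Finset (Fin n × Fin m)) (j : Fin m) : Prop :=
  (q.2.2.1 j, j) ∈ Q ∨ (q.2.2.2 j, j) ∈ Q ∨ n < 2 * (Q.filter fun c => c.2 = j).card

/-- Column `j` is compromised: it satisfies (i) or (ii), or some ancestor `u` of `π⁻¹(j)`
in the tree is such that column `π u` satisfies (i) or (ii). -/
def compromisedCol19 (n m : ℕ) (q : HardQ n m) (Q : Finset (Fin n × Fin m))
    (j : Fin m) : Prop :=
  colBad n m q Q j ∨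
  ∃ w u : {u : List Bool // u ∈ internalNodes m}, q.2.1 w = j ∧
    u.1 <+: w.1 ∧ u.1 ≠ w.1 ∧ colBad n m q Q (q.2.1 u)

/-- The progress measure `I_t = min{A_t + (4·C0·log₂ m / n)·B_t, m/2}` of the decision tree
`D` on the hard-distribution input given by `q` after `t` queries, where `A_t` is the number
of compromised columns and `B_t` the number of queried cells outside compromised columns. -/
noncomputable def Imeasure19 (n m : ℕ) (C0 : ℝ)
    (D : DTree (Fin n × Fin m) (PSym n m (Fin n × Fin m))) (q : HardQ n m) (t : ℕ) : ℝ :=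
  min
    (({j : Fin m | compromisedCol19 n m q (queriedUpTo D (hardInput n m q) t) j}.ncard : ℝ) +
      (4 * C0 * Real.logb 2 m / n) *
        ({c : Fin n × Fin m | c ∈ queriedUpTo D (hardInput n m q) t ∧
          ¬ compromisedCol19 n m q (queriedUpTo D (hardInput n m q) t) c.2}.ncard : ℝ))
    (m / 2)

/-! Fix all columns of `ℓ` but one. Until the tree hits the zero of that column it sees only
ones there, so it probes the cells of the column in an order that does not depend on where the
zero is; as the zero is uniform among `n` rows, each column whose zero is found costs `(n+1)/2`
probes on average. Summing over the columns, `(n+1) · E[#zeros found] ≤ 2 · E[cost]`, and on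
every input either `c1·m` zeros are found or `c2·n·m` cells are probed. -/

open Finset

namespace DTree

variable {ι σ : Type}

/-- A needle hidden at one of the positions `v p`, `p ∈ S`, costs on average at least
`(#S + 1) / 2` probes of these positions per time it is found. -/
theorem card_add_one_mul_card_mem_queryList_le {P : Type} [BEq ι] [LawfulBEq ι] [DecidableEq P]
    (T : DTree ι σ) {v : P → ι} {x : P → ι → σ} {y : ι → σ} {a b : σ}
    (hab : a ≠ b)
    (hneedle : ∀ p, x p (v p) = a) (hhay : ∀ p q, q ≠ p → x p (v q) = b)
    (hrest : ∀ p, ∀ w ∉ Set.range v, x p w = y w) (S : Finset P) :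
    (#S + 1) * #{p ∈ S | v p ∈ T.queryList (x p)} ≤
      2 * ∑ p ∈ S, #{q ∈ S | v q ∈ T.queryList (x p)} := by
  have hv : Function.Injective v := fun p q hpq => by
    by_contra hne
    exact hab ((hneedle q).symm.trans (hpq ▸ hhay q p hne))
  induction T generalizing S with
  | leaf _ => simp [queryList]
  | node w c ih =>
    simp only [queryList, List.mem_cons]
    by_cases hw : ∃ p₀ ∈ S, w = v p₀
    · obtain ⟨p₀, hp₀, rfl⟩ := hw
      have hrow : ∀ p ∈ S.erase p₀, ∀ q,
          (v q = v p₀ ∨ v q ∈ (c (x p (v p₀))).queryList (x p)) ↔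
            q = p₀ ∨ v q ∈ (c b).queryList (x p) := by
        intro p hp q
        rw [hhay p p₀ (ne_of_mem_erase hp).symm, hv.eq_iff]
      have hfound : #{p ∈ S | v p = v p₀ ∨ v p ∈ (c (x p (v p₀))).queryList (x p)} =
          #{p ∈ S.erase p₀ | v p ∈ (c b).queryList (x p)} + 1 := by
        rw [← card_erase_add_one (mem_filter.mpr ⟨hp₀, Or.inl rfl⟩), ← filter_erase]
        congr 2
        refine filter_congr fun p hp => ?_
        rw [hrow p hp p, or_iff_right (ne_of_mem_erase hp)]
      have hcount : ∀ p ∈ S.erase p₀,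
          #{q ∈ S | v q = v p₀ ∨ v q ∈ (c (x p (v p₀))).queryList (x p)} =
            #{q ∈ S.erase p₀ | v q ∈ (c b).queryList (x p)} + 1 := by
        intro p hp
        rw [← card_erase_add_one (mem_filter.mpr ⟨hp₀, Or.inl rfl⟩), ← filter_erase]
        congr 2
        refine filter_congr fun q hq => ?_
        rw [hrow p hp q, or_iff_right (ne_of_mem_erase hq)]
      have hpos :
          1 ≤ #{q ∈ S | v q = v p₀ ∨ v q ∈ (c (x p₀ (v p₀))).queryList (x p₀)} :=
        card_pos.mpr ⟨p₀, mem_filter.mpr ⟨hp₀, Or.inl rfl⟩⟩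
      have hle : #{p ∈ S.erase p₀ | v p ∈ (c b).queryList (x p)} ≤ #(S.erase p₀) :=
        card_filter_le _ _
      have hS := card_erase_add_one hp₀
      have ih' := ih b (S.erase p₀)
      rw [hfound, ← add_sum_erase S _ hp₀, sum_congr rfl hcount, sum_add_distrib, sum_const,
        smul_eq_mul, mul_one, ← hS]
      nlinarith
    · push Not at hw
      set s₀ := if w ∈ Set.range v then b else y w
      have hs₀ : ∀ p ∈ S, x p w = s₀ := by
        intro p hp
        by_cases hwr : w ∈ Set.range v
        · obtain ⟨q, rfl⟩ := hwr
          simp only [s₀, Set.mem_range_self, if_true]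
          exact hhay p q fun h => hw p hp (h ▸ rfl)
        · simp only [s₀, hwr, if_false]
          exact hrest p w hwr
      have hmem : ∀ p ∈ S, ∀ q ∈ S,
          (v q = w ∨ v q ∈ (c (x p w)).queryList (x p)) ↔
            v q ∈ (c s₀).queryList (x p) := by
        intro p hp q hq
        rw [hs₀ p hp, or_iff_right fun h => hw q hq h.symm]
      rw [filter_congr fun p hp => hmem p hp p hp,
        sum_congr rfl fun p hp => congrArg card (filter_congr fun q hq => hmem p hp q hq)]
      exact ih s₀ S

end DTree

theorem Fintype.sum_sum_update_eq_card_nsmul {α β M : Type} [DecidableEq α] [Fintype α]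
    [Fintype β] [AddCommMonoid M] (j : α) (f : (α → β) → M) :
    ∑ ℓ, ∑ b, f (Function.update ℓ j b) = Fintype.card β • ∑ ℓ, f ℓ := by
  have hinv : Function.Involutive fun p : (α → β) × β => (Function.update p.1 j p.2, p.1 j) :=
    fun p => by simp
  rw [← Fintype.sum_prod_type',
    ← Fintype.sum_equiv hinv.toPerm (fun p => f p.1) _ fun _ => by simp,
    Fintype.sum_prod_type' (fun ℓ (_ : β) => f ℓ)]
  simp only [sum_const, card_univ, smul_sum]

theorem Fintype.sum_le_sum_of_sum_update_le {α β M : Type} [DecidableEq α] [Fintype α]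
    [Fintype β] [AddCommMonoid M] [LinearOrder M] [IsOrderedCancelAddMonoid M] (j : α)
    {f g : (α → β) → M}
    (h : ∀ ℓ, ∑ b, f (Function.update ℓ j b) ≤ ∑ b, g (Function.update ℓ j b)) :
    ∑ ℓ, f ℓ ≤ ∑ ℓ, g ℓ := by
  cases isEmpty_or_nonempty β with
  | inl _ =>
    have : IsEmpty (α → β) := ⟨fun ℓ => isEmptyElim (ℓ j)⟩
    simp
  | inr _ =>
    rw [← nsmul_le_nsmul_iff_right (Fintype.card_ne_zero (α := β)),
      ← Fintype.sum_sum_update_eq_card_nsmul, ← Fintype.sum_sum_update_eq_card_nsmul]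
    exact sum_le_sum fun ℓ _ => h ℓ

section HardInputs

variable {n m : ℕ} {β : Type}

theorem PSym.zero_ne_one : PSym.zero n m β ≠ PSym.one n m β := by
  simp [PSym.zero, PSym.one]

theorem xhard_val_eq_false_iff (ℓ : Fin m → Fin n) (c : Fin n × Fin m) :
    (xhard n m β ℓ c).val = false ↔ c.1 = ℓ c.2 := by
  unfold xhard
  split_ifs with h <;> simp [PSym.zero, PSym.one, h]

theorem card_filter_xhard_val_eq_false (ℓ : Fin m → Fin n) (L : List (Fin n × Fin m)) :
    #{c ∈ L.toFinset | (xhard n m β ℓ c).val = false} = #{j | (ℓ j, j) ∈ L} := by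
  have himage : {c ∈ L.toFinset | (xhard n m β ℓ c).val = false} =
      image (fun j => (ℓ j, j)) {j | (ℓ j, j) ∈ L} := by
    ext ⟨i, j⟩
    simp only [mem_filter, mem_image, List.mem_toFinset, mem_univ, true_and,
      xhard_val_eq_false_iff, Prod.mk.injEq]
    constructor
    · rintro ⟨h, rfl⟩
      exact ⟨j, h, rfl, rfl⟩
    · rintro ⟨k, h, rfl, rfl⟩
      exact ⟨h, rfl⟩
  rw [himage, card_image_of_injective _ fun j k h => congrArg Prod.snd h]

theorem List.sum_card_filter_mem_le_length {α κ : Type} [Fintype α] [Fintype κ]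
    [DecidableEq α] [DecidableEq κ] (L : List (α × κ)) :
    ∑ j, #{i | (i, j) ∈ L} ≤ L.length :=
  calc ∑ j, #{i | (i, j) ∈ L}
      = #{c | c ∈ L} := by simp only [card_filter, Fintype.sum_prod_type_right]
    _ = #L.toFinset := by congr 1; ext; simp
    _ ≤ L.length := L.toFinset_card_le

theorem DTree.sum_zero_queried_in_column_le (T : DTree (Fin n × Fin m) (PSym n m β)) (j : Fin m) :
    ∑ ℓ : Fin m → Fin n,
        (n + 1) * (if (ℓ j, j) ∈ T.queryList (xhard n m β ℓ) then 1 else 0) ≤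
      ∑ ℓ : Fin m → Fin n, 2 * #{i | (i, j) ∈ T.queryList (xhard n m β ℓ)} := by
  refine Fintype.sum_le_sum_of_sum_update_le j fun ℓ => ?_
  have hsearch := T.card_add_one_mul_card_mem_queryList_le (v := fun i => (i, j))
    (x := fun i => xhard n m β (Function.update ℓ j i)) (y := xhard n m β ℓ) PSym.zero_ne_one
    (fun i => by simp [xhard]) (fun i i' hi => by simp [xhard, hi])
    (fun i c hc => by
      have hcj : c.2 ≠ j := fun h => hc ⟨c.1, by rw [← h]⟩
      simp [xhard, hcj]) univ
  rw [card_univ, Fintype.card_fin, card_filter, mul_sum] at hsearch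
  simpa only [Function.update_self, mul_sum] using hsearch

theorem DTree.succ_mul_sum_card_zeros_queried_le (T : DTree (Fin n × Fin m) (PSym n m β)) :
    (n + 1) * ∑ ℓ : Fin m → Fin n, #{j | (ℓ j, j) ∈ T.queryList (xhard n m β ℓ)} ≤
      2 * ∑ ℓ : Fin m → Fin n, T.cost (xhard n m β ℓ) :=
  calc (n + 1) * ∑ ℓ : Fin m → Fin n, #{j | (ℓ j, j) ∈ T.queryList (xhard n m β ℓ)}
      = ∑ j, ∑ ℓ : Fin m → Fin n,
          (n + 1) * (if (ℓ j, j) ∈ T.queryList (xhard n m β ℓ) then 1 else 0) := by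
        simp only [card_filter, mul_sum]
        exact sum_comm
    _ ≤ ∑ j, ∑ ℓ : Fin m → Fin n, 2 * #{i | (i, j) ∈ T.queryList (xhard n m β ℓ)} :=
        sum_le_sum fun j _ => T.sum_zero_queried_in_column_le j
    _ = 2 * ∑ ℓ : Fin m → Fin n, ∑ j, #{i | (i, j) ∈ T.queryList (xhard n m β ℓ)} := by
        rw [sum_comm, mul_sum]
        simp only [mul_sum]
    _ ≤ 2 * ∑ ℓ : Fin m → Fin n, T.cost (xhard n m β ℓ) := by
        gcongr with ℓ
        exact List.sum_card_filter_mem_le_length _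

end HardInputs

theorem min_mul_card_le_sum_add_sum {ι : Type} [Fintype ι] {Z C : ι → ℝ} {a b : ℝ}
    (hZ : ∀ i, 0 ≤ Z i) (hC : ∀ i, 0 ≤ C i) (h : ∀ i, a ≤ Z i ∨ b ≤ C i) :
    min a b * Fintype.card ι ≤ ∑ i, Z i + ∑ i, C i := by
  have hpoint : ∀ i, min a b ≤ Z i + C i := fun i => by
    rcases h i with hi | hi
    · linarith [min_le_left a b, hC i]
    · linarith [min_le_right a b, hZ i]
  rw [← sum_add_distrib, mul_comm, ← nsmul_eq_mul, ← card_univ, ← sum_const]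
  exact sum_le_sum fun i _ => hpoint i

theorem statement6_general (n m : ℕ) (hn : 2 ≤ n)
    (c1 c2 : ℝ) (hc1 : 0 < c1)
    (T : DTree (Fin n × Fin m) (PSym n m (Fin n × Fin m)))
    (hcond : ∀ ℓ : Fin m → Fin n,
      c1 * m ≤ (((T.queryList (xhard n m (Fin n × Fin m) ℓ)).toFinset.filter
          fun c => (xhard n m (Fin n × Fin m) ℓ c).val = false).card : ℝ) ∨
      c2 * n * m ≤ ((T.queryList (xhard n m (Fin n × Fin m) ℓ)).toFinset.card : ℝ)) :
    (1 / 2) * min ((⌊c1 * (n : ℝ) * m / 8⌋ : ℝ)) (c2 * n * m) ≤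
      (∑ ℓ : Fin m → Fin n, (T.cost (xhard n m (Fin n × Fin m) ℓ) : ℝ)) /
        (Fintype.card (Fin m → Fin n) : ℝ) := by
  set Z : (Fin m → Fin n) → ℝ := fun ℓ =>
    #{j | (ℓ j, j) ∈ T.queryList (xhard n m (Fin n × Fin m) ℓ)}
  set C : (Fin m → Fin n) → ℝ := fun ℓ => T.cost (xhard n m (Fin n × Fin m) ℓ)
  have hsearch : ((n : ℝ) + 1) * ∑ ℓ, Z ℓ ≤ 2 * ∑ ℓ, C ℓ := by
    simp only [Z, C]
    exact_mod_cast T.succ_mul_sum_card_zeros_queried_le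
  have hcases : ∀ ℓ, c1 * m * (n + 1) / 2 ≤ (n + 1) / 2 * Z ℓ ∨ c2 * n * m ≤ C ℓ := by
    intro ℓ
    rcases hcond ℓ with hzeros | hqueries
    · rw [card_filter_xhard_val_eq_false] at hzeros
      left
      nlinarith
    · right
      refine hqueries.trans ?_
      simp only [C, DTree.cost]
      exact_mod_cast List.toFinset_card_le _
  have hfloor : (⌊c1 * (n : ℝ) * m / 8⌋ : ℝ) ≤ c1 * m * (n + 1) / 2 :=
    (Int.floor_le _).trans (by nlinarith [mul_nonneg hc1.le (Nat.cast_nonneg m)])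
  have hK : (0 : ℝ) < Fintype.card (Fin m → Fin n) := by
    have : Nonempty (Fin m → Fin n) := ⟨fun _ => ⟨0, by omega⟩⟩
    exact_mod_cast Fintype.card_pos
  have hmin :=
    min_mul_card_le_sum_add_sum (fun ℓ => by positivity) (fun ℓ => by positivity) hcases
  rw [le_div_iff₀ hK, mul_assoc]
  calc 1 / 2 * (min (⌊c1 * (n : ℝ) * m / 8⌋ : ℝ) (c2 * n * m) *
        Fintype.card (Fin m → Fin n))
      ≤ 1 / 2 * (∑ ℓ, (n + 1) / 2 * Z ℓ + ∑ ℓ, C ℓ) := by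
        gcongr
        exact (mul_le_mul_of_nonneg_right (min_le_min_right _ hfloor) hK.le).trans hmin
    _ ≤ ∑ ℓ, C ℓ := by
        rw [← mul_sum]
        linarith

/-- A deterministic decision tree rejecting every hard-distribution input
`x^ℓ` that, on each `x^ℓ`, either finds at least `c₁·m` zeroes or queries at least `c₂·n·m`
cells, has expected cost at least `(1/2)·min(⌊c₁·n·m/8⌋, c₂·n·m)` over uniform `ℓ`. -/
theorem statement6 (n m : ℕ) (hn : 2 ≤ n) (hm : 2 ≤ m)
    (c1 c2 : ℝ) (hc1 : 0 < c1) (hc2 : 0 < c2)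
    (T : DTree (Fin n × Fin m) (PSym n m (Fin n × Fin m)))
    (hrej : ∀ ℓ : Fin m → Fin n, T.eval (xhard n m (Fin n × Fin m) ℓ) = false)
    (hcond : ∀ ℓ : Fin m → Fin n,
      c1 * m ≤ (((T.queryList (xhard n m (Fin n × Fin m) ℓ)).toFinset.filter
          fun c => (xhard n m (Fin n × Fin m) ℓ c).val = false).card : ℝ) ∨
      c2 * n * m ≤ ((T.queryList (xhard n m (Fin n × Fin m) ℓ)).toFinset.card : ℝ)) :
    (1 / 2) * min ((⌊c1 * (n : ℝ) * m / 8⌋ : ℝ)) (c2 * n * m) ≤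
      (∑ ℓ : Fin m → Fin n, (T.cost (xhard n m (Fin n × Fin m) ℓ) : ℝ)) /
        (Fintype.card (Fin m → Fin n) : ℝ) :=
  statement6_general n m hn c1 c2 hc1 T hcond
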